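/- Let f : A → B be a ring homomorphism and 𝔟 an ideal of B. Assume that either (1) 𝔟 is finitely generated as an A-module (via f), or (2) f is a finite ring homomorphism (B is a finitely generated A-module via f). Then the amalgamation A⋈^f 𝔟 is a Noetherian ring if and only if A is a Noetherian ring. -/

import Mathlib

/-- The amalgamation `A ⋈^f 𝔟 = {(a, f a + β) | a ∈ A, β ∈ 𝔟}` as a subring of `A × B`. -/
def amalgamation {A B : Type*} [CommRing A] [CommRing B]
    (f : A →+* B) (𝔟 : Ideal B) : Subring (A × B) where
  carrier := {x | ∃ a β, β ∈ 𝔟 ∧ x = (a, f a + β)}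
  one_mem' := ⟨1, 0, 𝔟.zero_mem, by ext <;> simp⟩
  zero_mem' := ⟨0, 0, 𝔟.zero_mem, by ext <;> simp⟩
  add_mem' := by
    rintro x y ⟨a₁, β₁, hβ₁, rfl⟩ ⟨a₂, β₂, hβ₂, rfl⟩
    exact ⟨a₁ + a₂, β₁ + β₂, 𝔟.add_mem hβ₁ hβ₂, by
      simp only [Prod.ext_iff, map_add, Prod.fst_add, Prod.snd_add]
      constructor <;> (try simp) <;> ring⟩
  neg_mem' := by
    rintro x ⟨a, β, hβ, rfl⟩
    exact ⟨-a, -β, 𝔟.neg_mem hβ, by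
      simp only [Prod.ext_iff, map_neg, Prod.fst_neg, Prod.snd_neg]
      constructor <;> (try simp) <;> ring⟩
  mul_mem' := by
    rintro x y ⟨a₁, β₁, hβ₁, rfl⟩ ⟨a₂, β₂, hβ₂, rfl⟩
    refine ⟨a₁ * a₂, f a₁ * β₂ + β₁ * f a₂ + β₁ * β₂,
      𝔟.add_mem (𝔟.add_mem (Ideal.mul_mem_left _ _ hβ₂) (Ideal.mul_mem_right _ _ hβ₁))
        (Ideal.mul_mem_right _ _ hβ₁), by
      simp only [Prod.ext_iff, map_mul, Prod.fst_mul, Prod.snd_mul]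
      constructor <;> (try simp) <;> ring⟩

/-- If `𝔟` is a finitely generated `A`-module (via `f`), or `f` is a finite ring
homomorphism, then `A ⋈^f 𝔟` is Noetherian iff `A` is Noetherian. -/
theorem amalgamation_noetherian_iff {A B : Type*} [CommRing A] [CommRing B]
    (f : A →+* B) (𝔟 : Ideal B)
    (h : (∃ (n : ℕ) (β : Fin n → B), (∀ i, β i ∈ 𝔟) ∧
        ∀ x ∈ 𝔟, ∃ u : Fin n → A, x = ∑ i, f (u i) * β i) ∨ f.Finite) :
    IsNoetherianRing ↥(amalgamation f 𝔟) ↔ IsNoetherianRing A := by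
  set S := amalgamation f 𝔟 with hSdef
  constructor
  · intro hS
    exact isNoetherianRing_of_surjective _ A ((RingHom.fst A B).comp S.subtype)
      (fun a => ⟨⟨(a, f a), a, 0, 𝔟.zero_mem, by simp⟩, rfl⟩)
  · intro hA
    letI : Algebra A S := RingHom.toAlgebra
      { toFun := fun a => ⟨(a, f a), a, 0, 𝔟.zero_mem, by simp⟩
        map_one' := by ext <;> simp
        map_mul' := fun a b => by ext <;> simp
        map_zero' := by ext <;> simp
        map_add' := fun a b => by ext <;> simp }
    have hsmul : ∀ (a : A) (x : S), ((a • x : S) : A × B) =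
        (a * (x : A × B).1, f a * (x : A × B).2) := by
      intro a x
      rw [Algebra.smul_def]
      rfl
    haveI hN : IsNoetherian A S := by
      rcases h with ⟨n, β, hβm, hgen⟩ | hf
      · -- 𝔟 is finitely generated as an A-module
        let g : Fin n → S := fun i => ⟨(0, β i), 0, β i, hβm i, by simp⟩
        haveI : Module.Finite A S := by
          rw [Module.finite_def, Submodule.fg_def]
          refine ⟨insert 1 (Set.range g), (Set.finite_range g).insert 1, ?_⟩
          rw [eq_top_iff]
          rintro x -
          obtain ⟨a, b, hb, hx⟩ := x.2
          obtain ⟨u, hu⟩ := hgen b hb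
          have hx' : x = a • 1 + ∑ i, u i • g i := by
            apply Subtype.ext
            push_cast
            rw [hx, hsmul]
            simp only [hsmul]
            apply Prod.ext
            · simp [g, Prod.fst_sum]
            · simp [g, Prod.snd_sum, hu]
          rw [hx']
          refine Submodule.add_mem _ (Submodule.smul_mem _ _ (Submodule.subset_span
            (Set.mem_insert _ _))) (Submodule.sum_mem _ fun i _ => Submodule.smul_mem _ _
            (Submodule.subset_span (Set.mem_insert_of_mem _ ⟨i, rfl⟩)))
        exact isNoetherian_of_isNoetherianRing_of_finite A S
      · -- f is finite
        letI : Algebra A B := f.toAlgebra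
        haveI : Module.Finite A B := hf
        haveI : IsNoetherian A (A × B) := isNoetherian_of_isNoetherianRing_of_finite A (A × B)
        refine isNoetherian_of_injective
          ({ toFun := fun x => (x : A × B)
             map_add' := fun x y => rfl
             map_smul' := fun a x => by
               show ((a • x : S) : A × B) = a • (x : A × B)
               rw [hsmul]
               apply Prod.ext
               · rfl
               · show f a * (x : A × B).2 = a • (x : A × B).2
                 rw [Algebra.smul_def]
                 rfl } : S →ₗ[A] A × B) Subtype.val_injective
    exact isNoetherianRing_iff.mpr (isNoetherian_of_tower A hN)
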